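/- For every ε > 0 there exists δ > 0 such that for every real (N+1)×(N+1) matrix A = (a_{ij}) one has ‖A‖² ≤ ε((tr A)² + Σ_{i<j}(a_{ij} − a_{ji})²) + (1 − δ)‖A‖²_HS, where ‖A‖ is the operator norm and ‖A‖_HS the Hilbert–Schmidt norm. -/
import Mathlib
open scoped BigOperators
open Finset

-- double sum expansion helper
lemma expand1 {m : ℕ} (A : Matrix (Fin m) (Fin m) ℝ) (x y : Fin m → ℝ) (σ : ℝ)
    (hx : ∑ i, x i ^ 2 = 1) (hy : ∑ i, y i ^ 2 = 1)
    (hσ : ∑ i, ∑ j, y i * A i j * x j = σ) :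
    ∑ i, ∑ j, (A i j) ^ 2 = σ ^ 2 + ∑ i, ∑ j, (A i j - σ * y i * x j) ^ 2 := by
  have h : ∀ i j : Fin m, (A i j - σ * y i * x j) ^ 2
      = A i j ^ 2 - 2 * σ * (y i * A i j * x j) + σ ^ 2 * (y i ^ 2 * x j ^ 2) := by
    intros; ring
  simp only [h, Finset.sum_add_distrib, Finset.sum_sub_distrib, ← Finset.mul_sum, hσ]
  rw [hx]; simp only [mul_one]; rw [hy]; ring

lemma expand2 {m : ℕ} (x y : Fin m → ℝ) (c : ℝ)
    (hx : ∑ i, x i ^ 2 = 1) (hy : ∑ i, y i ^ 2 = 1) (hc : ∑ i, x i * y i = c) :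
    ∑ i, ∑ j, (y i * x j - y j * x i) ^ 2 = 2 - 2 * c ^ 2 := by
  have h : ∀ i j : Fin m, (y i * x j - y j * x i) ^ 2
      = y i ^ 2 * x j ^ 2 + x i ^ 2 * y j ^ 2 - 2 * ((x i * y i) * (x j * y j)) := by
    intros; ring
  simp only [h, Finset.sum_add_distrib, Finset.sum_sub_distrib, ← Finset.mul_sum, hc,
    ← Finset.sum_mul, hx, hy]
  simp only [mul_one, one_mul]
  ring

-- diagonal sum ≤ full sum
lemma diag_le {m : ℕ} (R : Matrix (Fin m) (Fin m) ℝ) :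
    ∑ i, (R i i) ^ 2 ≤ ∑ i, ∑ j, (R i j) ^ 2 := by
  apply Finset.sum_le_sum
  intro i _
  exact Finset.single_le_sum (f := fun j => R i j ^ 2) (fun j _ => sq_nonneg _) (Finset.mem_univ i)

lemma transpose_sum {m : ℕ} (R : Matrix (Fin m) (Fin m) ℝ) :
    ∑ i, ∑ j, (R j i) ^ 2 = ∑ i, ∑ j, (R i j) ^ 2 := Finset.sum_comm

-- half-sum lemma for the ite
lemma ite_half {m : ℕ} (A : Matrix (Fin m) (Fin m) ℝ) :
    ∑ i, ∑ j, (if i < j then (A i j - A j i) ^ 2 else 0)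
      = (1/2) * ∑ i, ∑ j, (A i j - A j i) ^ 2 := by
  have key : (∑ i, ∑ j, (if i < j then (A i j - A j i) ^ 2 else 0))
      + (∑ i, ∑ j, (if j < i then (A i j - A j i) ^ 2 else 0))
      = ∑ i, ∑ j, (A i j - A j i) ^ 2 := by
    rw [← Finset.sum_add_distrib]
    apply Finset.sum_congr rfl
    intro i _
    rw [← Finset.sum_add_distrib]
    apply Finset.sum_congr rfl
    intro j _
    rcases lt_trichotomy i j with h | h | h
    · simp [h, not_lt.mpr h.le]
    · simp [h]
    · simp [h, not_lt.mpr h.le]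
  have swap : (∑ i, ∑ j, (if j < i then (A i j - A j i) ^ 2 else 0))
      = ∑ i, ∑ j, (if i < j then (A i j - A j i) ^ 2 else 0) := by
    rw [Finset.sum_comm]
    apply Finset.sum_congr rfl; intro i _; apply Finset.sum_congr rfl; intro j _
    congr 1; ring
  rw [swap] at key; linarith

private lemma pt_ineq (u a b : ℝ) : u^2/2 - 2*a^2 - 2*b^2 ≤ (u + (a - b))^2 := by
  nlinarith [sq_nonneg (u + 2*(a-b)), sq_nonneg (a+b)]

set_option maxHeartbeats 1000000 in
lemma core {m : ℕ} (A : Matrix (Fin m) (Fin m) ℝ) (x y : Fin m → ℝ) (σ ε' : ℝ)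
    (hx : ∑ i, x i ^ 2 = 1) (hy : ∑ i, y i ^ 2 = 1)
    (hσ : ∑ i, ∑ j, y i * A i j * x j = σ)
    (hε0 : 0 ≤ ε') (hε2 : ε' * (2 * m + 6) ≤ 1) :
    σ ^ 2 ≤ ε' * ((∑ i, A i i) ^ 2 + (1/2) * ∑ i, ∑ j, (A i j - A j i) ^ 2)
      + (1 - ε'/2) * (∑ i, ∑ j, (A i j) ^ 2) := by
  set R : Matrix (Fin m) (Fin m) ℝ := fun i j => A i j - σ * y i * x j with hR
  set ρ := ∑ i, ∑ j, (R i j) ^ 2 with hρ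
  set t := ∑ i, R i i with ht
  set c := ∑ i, x i * y i with hc
  have hρ0 : (0:ℝ) ≤ ρ := by
    rw [hρ]; positivity
  have hHS : ∑ i, ∑ j, (A i j) ^ 2 = σ ^ 2 + ρ := expand1 A x y σ hx hy hσ
  have htr : ∑ i, A i i = σ * c + t := by
    have h1 : ∀ i : Fin m, A i i = R i i + σ * (x i * y i) := by
      intro i; simp only [hR]; ring
    simp only [h1, Finset.sum_add_distrib, ← Finset.mul_sum, ← hc, ← ht]; ring
  have ht2 : t ^ 2 ≤ (m:ℝ) * ρ := by
    have h1 : t ^ 2 ≤ (m:ℝ) * ∑ i, (R i i) ^ 2 := by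
      have h0 := sq_sum_le_card_mul_sum_sq (s := (Finset.univ : Finset (Fin m)))
        (f := fun i => R i i)
      simpa only [Finset.card_univ, Fintype.card_fin, ht] using h0
    have h2 := diag_le R
    nlinarith [Nat.cast_nonneg (α := ℝ) m]
  have hanti : ∑ i, ∑ j, (A i j - A j i) ^ 2
      ≥ (1/2) * σ^2 * (2 - 2 * c^2) - 4 * ρ := by
    have pt : ∀ i j : Fin m, (1/2) * σ^2 * (y i * x j - y j * x i)^2
        - 2 * (R i j)^2 - 2 * (R j i)^2 ≤ (A i j - A j i) ^ 2 := by
      intro i j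
      have hA : A i j - A j i = σ * (y i * x j - y j * x i) + (R i j - R j i) := by
        simp only [hR]; ring
      rw [hA]
      have := pt_ineq (σ * (y i * x j - y j * x i)) (R i j) (R j i)
      nlinarith [this]
    have hsum : ∑ i, ∑ j, ((1/2) * σ^2 * (y i * x j - y j * x i)^2
        - 2 * (R i j)^2 - 2 * (R j i)^2) ≤ ∑ i, ∑ j, (A i j - A j i) ^ 2 :=
      Finset.sum_le_sum fun i _ => Finset.sum_le_sum fun j _ => pt i j
    have heq : ∑ i, ∑ j, ((1/2) * σ^2 * (y i * x j - y j * x i)^2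
        - 2 * (R i j)^2 - 2 * (R j i)^2)
        = (1/2) * σ^2 * (2 - 2 * c^2) - 4 * ρ := by
      have e2 := expand2 x y c hx hy rfl
      have e3 := transpose_sum R
      simp only [Finset.sum_sub_distrib, ← Finset.mul_sum]
      rw [e2, e3, ← hρ]; ring
    linarith
  rw [htr, hHS]
  have e1 : σ^2 * c^2 / 2 - t^2 ≤ (σ * c + t)^2 := by nlinarith [sq_nonneg (σ*c + 2*t)]
  have e4 : 0 ≤ ρ * (1 - ε' * ((m:ℝ) + 5/2)) := mul_nonneg hρ0 (by linarith)
  nlinarith [mul_le_mul_of_nonneg_left e1 hε0, mul_le_mul_of_nonneg_left hanti hε0,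
    mul_le_mul_of_nonneg_left ht2 hε0]

lemma enorm_sq_eq {n : Type*} [Fintype n] (x : EuclideanSpace ℝ n) :
    ‖x‖ ^ 2 = ∑ i, (x i) ^ 2 := by
  rw [EuclideanSpace.norm_eq, Real.sq_sqrt (by positivity)]
  simp [Real.norm_eq_abs, sq_abs]

lemma exists_max (N : ℕ) (T : EuclideanSpace ℝ (Fin (N+1)) →L[ℝ] EuclideanSpace ℝ (Fin (N+1))) :
    ∃ x : EuclideanSpace ℝ (Fin (N+1)), ‖x‖ = 1 ∧ ‖T x‖ = ‖T‖ := by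
  obtain ⟨x₀, hx₀, hmax⟩ := (isCompact_sphere (0 : EuclideanSpace ℝ (Fin (N+1))) 1).exists_isMaxOn
    (NormedSpace.sphere_nonempty.mpr zero_le_one) (T.continuous.norm.continuousOn)
  have hx₀n : ‖x₀‖ = 1 := mem_sphere_zero_iff_norm.mp hx₀
  refine ⟨x₀, hx₀n, le_antisymm (by simpa [hx₀n] using T.le_opNorm x₀) ?_⟩
  apply T.opNorm_le_bound (norm_nonneg _)
  intro z
  by_cases hz : z = 0
  · simp [hz]
  · have hzn : 0 < ‖z‖ := norm_pos_iff.mpr hz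
    have hm : (‖z‖⁻¹ • z) ∈ Metric.sphere (0 : EuclideanSpace ℝ (Fin (N+1))) 1 := by
      simp [norm_smul, abs_of_nonneg (inv_nonneg.mpr hzn.le), inv_mul_cancel₀ hzn.ne']
    have h2 := hmax hm
    simp only [Set.mem_setOf_eq, map_smul, norm_smul, Real.norm_eq_abs,
      abs_of_nonneg (inv_nonneg.mpr hzn.le)] at h2
    calc ‖T z‖ = ‖z‖ * (‖z‖⁻¹ * ‖T z‖) := by field_simp
    _ ≤ ‖z‖ * ‖T x₀‖ := by apply mul_le_mul_of_nonneg_left h2 hzn.le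
    _ = ‖T x₀‖ * ‖z‖ := mul_comm _ _

set_option maxHeartbeats 2000000 in
theorem stmt0 (N : ℕ) :
    ∀ ε > (0 : ℝ), ∃ δ > (0 : ℝ),
      ∀ A : Matrix (Fin (N + 1)) (Fin (N + 1)) ℝ,
        ‖Matrix.toEuclideanCLM (𝕜 := ℝ) A‖ ^ 2 ≤
          ε * ((Matrix.trace A) ^ 2 +
              ∑ i : Fin (N + 1), ∑ j : Fin (N + 1),
                (if i < j then (A i j - A j i) ^ 2 else 0)) +
          (1 - δ) * (∑ i : Fin (N + 1), ∑ j : Fin (N + 1), (A i j) ^ 2) := by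
  intro ε hε
  set ε' : ℝ := min ε (1 / (2 * N + 8)) with hε'
  have hε'pos : 0 < ε' := lt_min hε (by positivity)
  have hε'le : ε' ≤ ε := min_le_left _ _
  have hε'small : ε' * (2 * ((N:ℝ) + 1) + 6) ≤ 1 := by
    have h1 : ε' ≤ 1 / (2 * N + 8) := min_le_right _ _
    have h2 : (0:ℝ) < 2 * N + 8 := by positivity
    calc ε' * (2 * ((N:ℝ) + 1) + 6) ≤ (1 / (2 * N + 8)) * (2 * N + 8) := by
          apply mul_le_mul h1 (by ring_nf; rfl) (by positivity) (by positivity)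
      _ = 1 := by field_simp
  refine ⟨ε' / 2, by positivity, ?_⟩
  intro A
  set T := Matrix.toEuclideanCLM (𝕜 := ℝ) A with hT
  -- nonnegativity facts
  have htrsq : (0:ℝ) ≤ (Matrix.trace A) ^ 2 := sq_nonneg _
  have hite : (0:ℝ) ≤ ∑ i : Fin (N + 1), ∑ j : Fin (N + 1),
      (if i < j then (A i j - A j i) ^ 2 else 0) := by
    apply Finset.sum_nonneg; intro i _; apply Finset.sum_nonneg; intro j _
    split <;> positivity
  have hHSnn : (0:ℝ) ≤ ∑ i : Fin (N + 1), ∑ j : Fin (N + 1), (A i j) ^ 2 := by positivity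
  by_cases hTz : ‖T‖ = 0
  · rw [hTz]
    have : (0:ℝ) ≤ ε * ((Matrix.trace A) ^ 2 + ∑ i : Fin (N + 1), ∑ j : Fin (N + 1),
        (if i < j then (A i j - A j i) ^ 2 else 0)) := by positivity
    have h12 : (1 : ℝ) - ε'/2 ≥ 0 := by
      have : ε' ≤ 1 / (2 * N + 8) := min_le_right _ _
      have h8 : (1:ℝ) / (2 * N + 8) ≤ 1 := by
        rw [div_le_one (by positivity)]; linarith [Nat.cast_nonneg (α := ℝ) N]
      linarith
    nlinarith [mul_nonneg h12 hHSnn]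
  · have hTpos : 0 < ‖T‖ := lt_of_le_of_ne (norm_nonneg _) (Ne.symm hTz)
    obtain ⟨x₀, hx₀n, hx₀max⟩ := exists_max N T
    set σ := ‖T‖ with hσdef
    -- x as a plain function
    set xf : Fin (N+1) → ℝ := fun j => x₀ j with hxf
    have hx : ∑ i, xf i ^ 2 = 1 := by
      have := enorm_sq_eq x₀
      rw [hx₀n] at this; simpa using this.symm
    -- v = T x₀ componentwise
    have hv : ∀ i, (T x₀) i = ∑ j, A i j * xf j := by
      intro i
      have : (T x₀) i = Matrix.mulVec A x₀ i := rfl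
      rw [this]; simp [Matrix.mulVec, dotProduct, hxf]
    have hvn : ∑ i, ((T x₀) i) ^ 2 = σ ^ 2 := by
      rw [← enorm_sq_eq, hx₀max]
    set y : Fin (N+1) → ℝ := fun i => (T x₀) i / σ with hy'
    have hy : ∑ i, y i ^ 2 = 1 := by
      simp only [hy', div_pow]
      rw [← Finset.sum_div, hvn]
      field_simp
    have hσ : ∑ i, ∑ j, y i * A i j * xf j = σ := by
      have h1 : ∀ i : Fin (N+1), ∑ j, y i * A i j * xf j = y i * ∑ j, A i j * xf j := by
        intro i; rw [Finset.mul_sum]; apply Finset.sum_congr rfl; intros; ring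
      simp only [h1]
      have h2 : ∀ i : Fin (N+1), y i * ∑ j, A i j * xf j = ((T x₀) i) ^ 2 / σ := by
        intro i; rw [← hv i, hy']; ring
      simp only [h2]
      rw [← Finset.sum_div, hvn]
      field_simp [hTpos.ne']
    have key := core A xf y σ ε' hx hy hσ hε'pos.le (by push_cast; linarith)
    have htr : Matrix.trace A = ∑ i, A i i := by simp [Matrix.trace, Matrix.diag]
    have hhalf := ite_half A
    have hbig : (0:ℝ) ≤ (∑ i, A i i) ^ 2 + (1/2) * ∑ i, ∑ j, (A i j - A j i) ^ 2 := by
      have : (0:ℝ) ≤ ∑ i : Fin (N+1), ∑ j : Fin (N+1), (A i j - A j i) ^ 2 := by positivity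
      positivity
    have hmono : ε' * ((∑ i, A i i) ^ 2 + (1/2) * ∑ i, ∑ j, (A i j - A j i) ^ 2)
        ≤ ε * ((∑ i, A i i) ^ 2 + (1/2) * ∑ i, ∑ j, (A i j - A j i) ^ 2) :=
      mul_le_mul_of_nonneg_right hε'le hbig
    rw [htr, hhalf]
    linarith
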